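/- arXiv:math/9804115 — 3 statements merged into one kernel-verified Lean document; each statement's English description precedes it below -/
import Mathlib

section
/- Let D ≥ 1 be an integer, a_0, a_2, …, a_{2(D−1)} real numbers, P(r) = Σ_{j=0}^{D−1} a_{2j} r^{2j}, ρ₀ ∈ ℝ and a > 0, and define F(t) = e^{−ρ₀² t} ∫_ℝ e^{−r² t} r P(r) tanh(a r) dr for t > 0. Then for every integer N with 0 ≤ N ≤ D−1, F(t) − Σ_{k=0}^{N} c_k t^{k−D} = O(t^{N+1−D}) as t → 0⁺, where for 0 ≤ k ≤ D−1 the coefficient c_k is given by c_k = Σ_{ℓ=0}^{k} ((−ρ₀²)^{k−ℓ} / (k−ℓ)!) · (D−1−ℓ)! · a_{2(D−1−ℓ)}. -/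
open MeasureTheory Set Filter Asymptotics Topology

namespace HKAux

lemma continuous_tanh' : Continuous Real.tanh := by
  have h : Real.tanh = fun x => Real.sinh x / Real.cosh x :=
    funext fun x => Real.tanh_eq_sinh_div_cosh x
  rw [h]
  exact Real.continuous_sinh.div Real.continuous_cosh fun x => (Real.cosh_pos x).ne'

lemma abs_tanh_le_one (x : ℝ) : |Real.tanh x| ≤ 1 := by
  have h := Real.cosh_pos x
  rw [Real.tanh_eq_sinh_div_cosh, abs_div, abs_of_pos h, div_le_one h, abs_le]
  rw [Real.sinh_eq, Real.cosh_eq]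
  constructor <;> nlinarith [Real.exp_pos x, Real.exp_pos (-x)]

lemma tanh_tail (x : ℝ) : |Real.tanh x - 1| ≤ 2 * Real.exp (-(2 * x)) := by
  have h := Real.cosh_pos x
  have h1 : Real.tanh x - 1 = -Real.exp (-x) / Real.cosh x := by
    rw [Real.tanh_eq_sinh_div_cosh, div_sub_one h.ne', Real.sinh_eq, Real.cosh_eq]
    ring
  rw [h1, abs_div, abs_of_pos h, abs_neg, abs_of_pos (Real.exp_pos _), div_le_iff₀ h,
    Real.cosh_eq]
  have h2 : Real.exp (-(2 * x)) * Real.exp x = Real.exp (-x) := by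
    rw [← Real.exp_add]; ring_nf
  nlinarith [Real.exp_pos (-x), Real.exp_pos x, Real.exp_pos (-(2*x))]

lemma moment (j : ℕ) {t : ℝ} (ht : 0 < t) :
    ∫ x in Ioi (0 : ℝ), x ^ (2 * j + 1) * Real.exp (-x ^ 2 * t) =
      (Nat.factorial j : ℝ) / 2 * t ^ (-(j : ℝ) - 1) := by
  have hq : (-1 : ℝ) < ((2 * j + 1 : ℕ) : ℝ) := by push_cast; linarith [Nat.cast_nonneg (α := ℝ) j]
  have h := integral_rpow_mul_exp_neg_mul_rpow (p := 2) (q := ((2 * j + 1 : ℕ) : ℝ))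
    two_pos hq ht
  rw [show ∫ x in Ioi (0 : ℝ), x ^ (2 * j + 1) * Real.exp (-x ^ 2 * t)
      = ∫ x in Ioi (0 : ℝ), x ^ ((2 * j + 1 : ℕ) : ℝ) * Real.exp (-t * x ^ (2 : ℝ)) from ?_, h]
  · rw [show (-(((2 * j + 1 : ℕ) : ℝ) + 1) / 2) = -(j : ℝ) - 1 by push_cast; ring,
      show ((((2 * j + 1 : ℕ) : ℝ)) + 1) / 2 = (j : ℝ) + 1 by push_cast; ring,
      Real.Gamma_nat_eq_factorial j]
    ring
  · refine setIntegral_congr_fun measurableSet_Ioi fun x hx => ?_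
    rw [Real.rpow_natCast, show (2 : ℝ) = ((2 : ℕ) : ℝ) by norm_num, Real.rpow_natCast]
    ring_nf


lemma integrable_poly_gauss (n : ℕ) {t : ℝ} (ht : 0 < t) :
    Integrable (fun x : ℝ => x ^ n * Real.exp (-x ^ 2 * t)) := by
  have h := integrable_rpow_mul_exp_neg_mul_sq (b := t) ht
    (s := (n : ℝ)) (by exact_mod_cast neg_one_lt_zero.trans_le (Nat.cast_nonneg n))
  have he : ∀ x : ℝ, x ^ ((n : ℕ) : ℝ) * Real.exp (-t * x ^ 2)
      = x ^ n * Real.exp (-x ^ 2 * t) := fun x => by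
    rw [Real.rpow_natCast]; ring_nf
  exact (funext he) ▸ h

lemma integrable_gauss_tanh (a : ℝ) (n : ℕ) {t : ℝ} (ht : 0 < t) :
    Integrable (fun x : ℝ => Real.exp (-x ^ 2 * t) * x ^ n * Real.tanh (a * x)) := by
  refine Integrable.mono' (integrable_poly_gauss n ht).abs ?_ (Eventually.of_forall fun x => ?_)
  · exact Continuous.aestronglyMeasurable (by
      exact ((Real.continuous_exp.comp (by continuity)).mul (continuous_pow n)).mul
        (continuous_tanh'.comp (continuous_const.mul continuous_id)))
  · have h1 : ‖Real.exp (-x ^ 2 * t) * x ^ n * Real.tanh (a * x)‖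
        = |x ^ n * Real.exp (-x ^ 2 * t)| * |Real.tanh (a * x)| := by
      rw [Real.norm_eq_abs, ← abs_mul]; ring_nf
    rw [h1]
    calc |x ^ n * Real.exp (-x ^ 2 * t)| * |Real.tanh (a * x)|
        ≤ |x ^ n * Real.exp (-x ^ 2 * t)| * 1 :=
          mul_le_mul_of_nonneg_left (abs_tanh_le_one _) (abs_nonneg _)
      _ = |x ^ n * Real.exp (-x ^ 2 * t)| := mul_one _

lemma integrableOn_poly_exp (a : ℝ) (ha : 0 < a) (n : ℕ) :
    IntegrableOn (fun x : ℝ => x ^ n * Real.exp (-(2 * a * x))) (Ioi 0) := by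
  have h := integrableOn_rpow_mul_exp_neg_mul_rpow (s := (n : ℝ)) (p := 1) (b := 2 * a)
    (by exact_mod_cast neg_one_lt_zero.trans_le (Nat.cast_nonneg n)) one_pos (by positivity)
  refine h.congr_fun (fun x hx => ?_) measurableSet_Ioi
  dsimp only; rw [Real.rpow_natCast, Real.rpow_one]; ring_nf


lemma key (a : ℝ) (ha : 0 < a) (j : ℕ) : ∃ C : ℝ, 0 ≤ C ∧ ∀ t : ℝ, 0 < t →
    |(∫ r : ℝ, Real.exp (-r ^ 2 * t) * r ^ (2 * j + 1) * Real.tanh (a * r))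
      - (Nat.factorial j : ℝ) * t ^ (-(j : ℝ) - 1)| ≤ C := by
  set bnd : ℝ → ℝ := fun x => x ^ (2 * j + 1) * (2 * Real.exp (-(2 * a * x))) with hbnd
  have hbndint : IntegrableOn bnd (Ioi 0) := by
    have h0 : IntegrableOn (fun x : ℝ => 2 * (x ^ (2 * j + 1) * Real.exp (-(2 * a * x))))
        (Ioi 0) := (integrableOn_poly_exp a ha (2 * j + 1)).const_mul 2
    exact h0.congr_fun (fun x _ => by ring) measurableSet_Ioi
  have hbndnn : 0 ≤ ∫ x in Ioi (0 : ℝ), bnd x := by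
    refine setIntegral_nonneg measurableSet_Ioi fun x hx => ?_
    have : (0:ℝ) < x := hx
    positivity
  refine ⟨2 * ∫ x in Ioi (0 : ℝ), bnd x, by linarith, fun t ht => ?_⟩
  set f : ℝ → ℝ := fun x => Real.exp (-x ^ 2 * t) * x ^ (2 * j + 1) * Real.tanh (a * x)
    with hf
  set g : ℝ → ℝ := fun x => x ^ (2 * j + 1) * Real.exp (-x ^ 2 * t) with hg
  have heven : ∀ r : ℝ, f |r| = f r := by
    intro r
    rcases le_or_gt 0 r with h | h
    · rw [abs_of_nonneg h]
    · rw [abs_of_neg h, hf]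
      simp only [neg_sq, mul_neg, Real.tanh_neg, (odd_two_mul_add_one j).neg_pow]
      ring
  have h1 : (∫ r : ℝ, f r) = 2 * ∫ x in Ioi (0:ℝ), f x := by
    rw [← integral_comp_abs (f := f)]
    simp_rw [heven]
  have hgint : IntegrableOn g (Ioi 0) := (integrable_poly_gauss _ ht).integrableOn
  have hfint : IntegrableOn f (Ioi 0) := (integrable_gauss_tanh a _ ht).integrableOn
  have hsub : (∫ x in Ioi (0:ℝ), f x) - ∫ x in Ioi (0:ℝ), g x
      = ∫ x in Ioi (0:ℝ), (f x - g x) := (integral_sub hfint hgint).symm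
  have herr : |∫ x in Ioi (0:ℝ), (f x - g x)| ≤ ∫ x in Ioi (0:ℝ), bnd x := by
    rw [← Real.norm_eq_abs]
    refine norm_integral_le_of_norm_le hbndint ?_
    filter_upwards [ae_restrict_mem measurableSet_Ioi] with x hx
    have hx0 : (0:ℝ) < x := hx
    have e1 : Real.exp (-x ^ 2 * t) ≤ 1 := by
      rw [show (1:ℝ) = Real.exp 0 from (Real.exp_zero).symm]
      exact Real.exp_le_exp.2 (by nlinarith)
    have e2 : |Real.tanh (a * x) - 1| ≤ 2 * Real.exp (-(2 * a * x)) := by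
      have h2 := tanh_tail (a * x)
      rwa [← mul_assoc] at h2
    have e3 : f x - g x = x ^ (2 * j + 1) * Real.exp (-x ^ 2 * t) * (Real.tanh (a * x) - 1) := by
      rw [hf, hg]; ring
    rw [Real.norm_eq_abs, e3, abs_mul, abs_mul, abs_of_pos (pow_pos hx0 _),
      abs_of_pos (Real.exp_pos _), hbnd]
    have hp : (0:ℝ) < x ^ (2 * j + 1) := pow_pos hx0 _
    have he : (0:ℝ) < Real.exp (-x ^ 2 * t) := Real.exp_pos _
    have habs : (0:ℝ) ≤ |Real.tanh (a * x) - 1| := abs_nonneg _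
    calc x ^ (2 * j + 1) * Real.exp (-x ^ 2 * t) * |Real.tanh (a * x) - 1|
        ≤ x ^ (2 * j + 1) * 1 * (2 * Real.exp (-(2 * a * x))) := by
          apply mul_le_mul
          · exact mul_le_mul_of_nonneg_left e1 hp.le
          · exact e2
          · exact habs
          · positivity
      _ = x ^ (2 * j + 1) * (2 * Real.exp (-(2 * a * x))) := by ring
  have hmom : (∫ x in Ioi (0:ℝ), g x) = (Nat.factorial j : ℝ) / 2 * t ^ (-(j : ℝ) - 1) :=
    moment j ht
  have hid : (∫ r : ℝ, Real.exp (-r ^ 2 * t) * r ^ (2 * j + 1) * Real.tanh (a * r))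
      - (Nat.factorial j : ℝ) * t ^ (-(j : ℝ) - 1)
      = 2 * ((∫ x in Ioi (0:ℝ), f x) - ∫ x in Ioi (0:ℝ), g x) := by
    rw [show (∫ r : ℝ, Real.exp (-r ^ 2 * t) * r ^ (2 * j + 1) * Real.tanh (a * r))
        = ∫ r : ℝ, f r from rfl, h1, hmom]
    ring
  rw [hid, hsub, abs_mul, abs_of_pos (by norm_num : (0:ℝ) < 2)]
  have := mul_le_mul_of_nonneg_left herr (by norm_num : (0:ℝ) ≤ 2)
  exact this


end HKAux

set_option maxHeartbeats 1000000

open HKAux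

/-- Short-time asymptotics up to order `N ≤ D-1` of
`F(t) = e^{-ρ₀²t} ∫_ℝ e^{-r²t} r P(r) tanh(ar) dr` with `P(r) = Σ_{j<D} a_{2j} r^{2j}`:
`F(t) - Σ_{k≤N} c_k t^{k-D} = O(t^{N+1-D})` with
`c_k = Σ_{ℓ≤k} ((-ρ₀²)^{k-ℓ}/(k-ℓ)!) (D-1-ℓ)! a_{2(D-1-ℓ)}`. -/
theorem heat_kernel_expansion_leading_coefficients
    (D : ℕ) (hD : 1 ≤ D) (a2 : ℕ → ℝ) (ρ₀ a : ℝ) (ha : 0 < a) :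
    ∀ N : ℕ, N ≤ D - 1 →
      (fun t : ℝ =>
          Real.exp (-ρ₀ ^ 2 * t) *
              (∫ r : ℝ, Real.exp (-r ^ 2 * t) *
                (r * ∑ j ∈ Finset.range D, a2 j * r ^ (2 * j)) * Real.tanh (a * r)) -
            ∑ k ∈ Finset.range (N + 1),
              (∑ ℓ ∈ Finset.range (k + 1),
                  (-ρ₀ ^ 2) ^ (k - ℓ) / (Nat.factorial (k - ℓ) : ℝ) *
                    (Nat.factorial (D - 1 - ℓ) : ℝ) * a2 (D - 1 - ℓ)) *
                t ^ ((k : ℝ) - (D : ℝ))) =O[𝓝[>] 0]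
        fun t : ℝ => t ^ ((N : ℝ) + 1 - (D : ℝ)) := by
  intro N hN
  have hND : N + 1 ≤ D := by omega
  choose C hC using fun j : ℕ => key a ha j
  set b : ℕ → ℝ := fun ℓ => (Nat.factorial (D - 1 - ℓ) : ℝ) * a2 (D - 1 - ℓ) with hb
  set CE : ℝ := ∑ j ∈ Finset.range D, |a2 j| * C j with hCE
  set Kρ : ℝ := (ρ₀ ^ 2 + 1) ^ (N + 1) with hKρ
  set K : ℝ := (∑ ℓ ∈ Finset.range (N + 1), 2 * Kρ * |b ℓ|) +
      (∑ ℓ ∈ Finset.Ico (N + 1) D, |b ℓ|) + CE with hK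
  set δ : ℝ := min 1 (1 / (ρ₀ ^ 2 + 1)) with hδ
  have hδ0 : 0 < δ := by
    apply lt_min one_pos
    positivity
  rw [Asymptotics.isBigO_iff]
  refine ⟨K, ?_⟩
  filter_upwards [Ioc_mem_nhdsGT_of_mem (by simp [hδ0] : (0:ℝ) ∈ Ico (0:ℝ) δ)] with t htmem
  obtain ⟨ht0, htδ⟩ := htmem
  have ht1 : t ≤ 1 := htδ.trans (min_le_left _ _)
  have htρ : ρ₀ ^ 2 * t ≤ 1 := by
    have h2 : t ≤ 1 / (ρ₀ ^ 2 + 1) := htδ.trans (min_le_right _ _)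
    rw [le_div_iff₀ (by positivity)] at h2
    nlinarith [sq_nonneg ρ₀]
  -- per-j integrals
  set I : ℕ → ℝ := fun j =>
    ∫ r : ℝ, Real.exp (-r ^ 2 * t) * r ^ (2 * j + 1) * Real.tanh (a * r) with hI
  set E : ℕ → ℝ := fun j => I j - (Nat.factorial j : ℝ) * t ^ (-(j : ℝ) - 1) with hE
  have hEbd : ∀ j, |E j| ≤ C j := fun j => (hC j).2 t ht0
  -- split the integral
  have hsplit : (∫ r : ℝ, Real.exp (-r ^ 2 * t) *
        (r * ∑ j ∈ Finset.range D, a2 j * r ^ (2 * j)) * Real.tanh (a * r))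
      = ∑ j ∈ Finset.range D, a2 j * I j := by
    have hpt : ∀ r : ℝ, Real.exp (-r ^ 2 * t) *
        (r * ∑ j ∈ Finset.range D, a2 j * r ^ (2 * j)) * Real.tanh (a * r)
        = ∑ j ∈ Finset.range D,
            a2 j * (Real.exp (-r ^ 2 * t) * r ^ (2 * j + 1) * Real.tanh (a * r)) := by
      intro r
      rw [show Real.exp (-r ^ 2 * t) * (r * ∑ j ∈ Finset.range D, a2 j * r ^ (2 * j)) *
          Real.tanh (a * r) = (Real.exp (-r ^ 2 * t) * r * Real.tanh (a * r)) *
          ∑ j ∈ Finset.range D, a2 j * r ^ (2 * j) by ring, Finset.mul_sum]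
      refine Finset.sum_congr rfl fun j _ => ?_
      rw [pow_succ]
      ring
    simp_rw [hpt]
    rw [integral_finset_sum _ fun j _ =>
      ((integrable_gauss_tanh a (2 * j + 1) ht0).const_mul (a2 j))]
    exact Finset.sum_congr rfl fun j _ => integral_const_mul _ _
  -- rewrite the coefficient sum
  set T : ℕ → ℝ := fun ℓ =>
    ∑ m ∈ Finset.range (N + 1 - ℓ), (-ρ₀ ^ 2 * t) ^ m / (Nat.factorial m : ℝ) with hT
  have hcsum : (∑ k ∈ Finset.range (N + 1),
        (∑ ℓ ∈ Finset.range (k + 1),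
            (-ρ₀ ^ 2) ^ (k - ℓ) / (Nat.factorial (k - ℓ) : ℝ) *
              (Nat.factorial (D - 1 - ℓ) : ℝ) * a2 (D - 1 - ℓ)) * t ^ ((k : ℝ) - (D : ℝ)))
      = ∑ ℓ ∈ Finset.range (N + 1), b ℓ * T ℓ * t ^ ((ℓ : ℝ) - (D : ℝ)) := by
    have h1 : (∑ k ∈ Finset.range (N + 1),
          (∑ ℓ ∈ Finset.range (k + 1),
              (-ρ₀ ^ 2) ^ (k - ℓ) / (Nat.factorial (k - ℓ) : ℝ) *
                (Nat.factorial (D - 1 - ℓ) : ℝ) * a2 (D - 1 - ℓ)) * t ^ ((k : ℝ) - (D : ℝ)))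
        = ∑ k ∈ Finset.range (N + 1), ∑ ℓ ∈ Finset.range (k + 1),
            (fun ℓ m => (-ρ₀ ^ 2) ^ m / (Nat.factorial m : ℝ) * b ℓ *
              t ^ (((ℓ + m : ℕ) : ℝ) - (D : ℝ))) ℓ (k - ℓ) := by
      refine Finset.sum_congr rfl fun k hk => ?_
      rw [Finset.sum_mul]
      refine Finset.sum_congr rfl fun ℓ hℓ => ?_
      have hlk : ℓ + (k - ℓ) = k := Nat.add_sub_cancel' (Nat.lt_succ_iff.mp (Finset.mem_range.mp hℓ))
      simp only [hlk, hb]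
      ring
    rw [h1, Finset.sum_range_diag_flip (N + 1)
      (fun ℓ m => (-ρ₀ ^ 2) ^ m / (Nat.factorial m : ℝ) * b ℓ *
        t ^ (((ℓ + m : ℕ) : ℝ) - (D : ℝ)))]
    refine Finset.sum_congr rfl fun ℓ hℓ => ?_
    simp only [hT, Finset.mul_sum, Finset.sum_mul]
    refine Finset.sum_congr rfl fun m hm => ?_
    rw [show ((ℓ + m : ℕ) : ℝ) - (D : ℝ) = (m : ℝ) + ((ℓ : ℝ) - (D : ℝ)) by push_cast; ring,
      Real.rpow_add ht0, Real.rpow_natCast, mul_pow]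
    ring
  -- reflect and decompose the main term
  have hrefl : ∑ ℓ ∈ Finset.range D, b ℓ * Real.exp (-ρ₀ ^ 2 * t) * t ^ ((ℓ : ℝ) - (D : ℝ))
      = ∑ j ∈ Finset.range D,
          Real.exp (-ρ₀ ^ 2 * t) * (a2 j * ((Nat.factorial j : ℝ) * t ^ (-(j : ℝ) - 1))) := by
    rw [← Finset.sum_range_reflect]
    refine Finset.sum_congr rfl fun j hj => ?_
    have hj' : j < D := Finset.mem_range.mp hj
    have e1 : D - 1 - (D - 1 - j) = j := by omega
    have e2 : ((D - 1 - j : ℕ) : ℝ) - (D : ℝ) = -(j : ℝ) - 1 := by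
      have h3 : ((D - 1 - j : ℕ) : ℝ) = (D : ℝ) - 1 - (j : ℝ) := by
        rw [Nat.cast_sub (by omega), Nat.cast_sub (by omega)]
        norm_num
      rw [h3]; ring
    simp only [hb, e1, e2]
    ring
  have hmain : Real.exp (-ρ₀ ^ 2 * t) * ∑ j ∈ Finset.range D, a2 j * I j
      = (∑ ℓ ∈ Finset.range D, b ℓ * Real.exp (-ρ₀ ^ 2 * t) * t ^ ((ℓ : ℝ) - (D : ℝ)))
        + Real.exp (-ρ₀ ^ 2 * t) * ∑ j ∈ Finset.range D, a2 j * E j := by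
    rw [hrefl, ← Finset.mul_sum, ← mul_add]
    congr 1
    rw [← Finset.sum_add_distrib]
    refine Finset.sum_congr rfl fun j _ => ?_
    simp only [hE]
    ring
  have hsplit2 : ∑ ℓ ∈ Finset.range D, b ℓ * Real.exp (-ρ₀ ^ 2 * t) * t ^ ((ℓ : ℝ) - (D : ℝ))
      = (∑ ℓ ∈ Finset.range (N + 1), b ℓ * Real.exp (-ρ₀ ^ 2 * t) * t ^ ((ℓ : ℝ) - (D : ℝ)))
        + ∑ ℓ ∈ Finset.Ico (N + 1) D, b ℓ * Real.exp (-ρ₀ ^ 2 * t) * t ^ ((ℓ : ℝ) - (D : ℝ)) :=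
    (Finset.sum_range_add_sum_Ico _ hND).symm
  have hdiff : ∑ ℓ ∈ Finset.range (N + 1), b ℓ * Real.exp (-ρ₀ ^ 2 * t) * t ^ ((ℓ : ℝ) - (D : ℝ))
      - ∑ ℓ ∈ Finset.range (N + 1), b ℓ * T ℓ * t ^ ((ℓ : ℝ) - (D : ℝ))
      = ∑ ℓ ∈ Finset.range (N + 1),
          b ℓ * (Real.exp (-ρ₀ ^ 2 * t) - T ℓ) * t ^ ((ℓ : ℝ) - (D : ℝ)) := by
    rw [← Finset.sum_sub_distrib]
    exact Finset.sum_congr rfl fun ℓ _ => by ring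
  have hfinal : Real.exp (-ρ₀ ^ 2 * t) *
        (∫ r : ℝ, Real.exp (-r ^ 2 * t) *
          (r * ∑ j ∈ Finset.range D, a2 j * r ^ (2 * j)) * Real.tanh (a * r)) -
        ∑ k ∈ Finset.range (N + 1),
          (∑ ℓ ∈ Finset.range (k + 1),
              (-ρ₀ ^ 2) ^ (k - ℓ) / (Nat.factorial (k - ℓ) : ℝ) *
                (Nat.factorial (D - 1 - ℓ) : ℝ) * a2 (D - 1 - ℓ)) * t ^ ((k : ℝ) - (D : ℝ))
      = (∑ ℓ ∈ Finset.range (N + 1),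
            b ℓ * (Real.exp (-ρ₀ ^ 2 * t) - T ℓ) * t ^ ((ℓ : ℝ) - (D : ℝ)))
        + (∑ ℓ ∈ Finset.Ico (N + 1) D,
            b ℓ * Real.exp (-ρ₀ ^ 2 * t) * t ^ ((ℓ : ℝ) - (D : ℝ)))
        + Real.exp (-ρ₀ ^ 2 * t) * ∑ j ∈ Finset.range D, a2 j * E j := by
    rw [hsplit, hmain, hcsum, hsplit2, ← hdiff]
    ring
  -- bounds
  set τ : ℝ := t ^ ((N : ℝ) + 1 - (D : ℝ)) with hτ
  have hτpos : 0 < τ := Real.rpow_pos_of_pos ht0 _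
  have hexple : Real.exp (-ρ₀ ^ 2 * t) ≤ 1 := by
    have h0 : -ρ₀ ^ 2 * t ≤ 0 := by nlinarith [sq_nonneg ρ₀]
    calc Real.exp (-ρ₀ ^ 2 * t) ≤ Real.exp 0 := Real.exp_le_exp.2 h0
      _ = 1 := Real.exp_zero
  have hterm1 : ∀ ℓ ∈ Finset.range (N + 1),
      |b ℓ * (Real.exp (-ρ₀ ^ 2 * t) - T ℓ) * t ^ ((ℓ : ℝ) - (D : ℝ))|
        ≤ 2 * Kρ * |b ℓ| * τ := by
    intro ℓ hℓ
    have hℓN : ℓ ≤ N := Nat.lt_succ_iff.mp (Finset.mem_range.mp hℓ)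
    set n : ℕ := N + 1 - ℓ with hn
    have hn0 : 0 < n := by omega
    have hx : |(-ρ₀ ^ 2 * t)| ≤ 1 := by
      rw [show -ρ₀ ^ 2 * t = -(ρ₀ ^ 2 * t) by ring, abs_neg, abs_of_nonneg (by positivity)]
      exact htρ
    have hb1 := Real.exp_bound hx hn0
    have hTeq : T ℓ = ∑ m ∈ Finset.range n, (-ρ₀ ^ 2 * t) ^ m / (Nat.factorial m : ℝ) := rfl
    have hfac : ((n.succ : ℝ) / ((n.factorial : ℝ) * n)) ≤ 2 := by
      rw [div_le_iff₀ (by positivity)]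
      have h1 : (1 : ℝ) ≤ (n.factorial : ℝ) := by exact_mod_cast (Nat.factorial_pos n)
      have h2 : (1 : ℝ) ≤ (n : ℝ) := by exact_mod_cast hn0
      push_cast
      nlinarith
    have habs : |(-ρ₀ ^ 2 * t)| = ρ₀ ^ 2 * t := by
      rw [show -ρ₀ ^ 2 * t = -(ρ₀ ^ 2 * t) by ring, abs_neg, abs_of_nonneg (by positivity)]
    have hnN : n ≤ N + 1 := by omega
    have hpow : (ρ₀ ^ 2 * t) ^ n ≤ Kρ * t ^ n := by
      have h3 : (ρ₀ ^ 2) ^ n ≤ Kρ := by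
        rw [hKρ]
        calc (ρ₀ ^ 2) ^ n ≤ (ρ₀ ^ 2 + 1) ^ n :=
              pow_le_pow_left₀ (sq_nonneg ρ₀) (by linarith) n
          _ ≤ (ρ₀ ^ 2 + 1) ^ (N + 1) :=
              pow_le_pow_right₀ (by linarith [sq_nonneg ρ₀]) hnN
      rw [mul_pow]
      exact mul_le_mul_of_nonneg_right h3 (by positivity)
    have hrem : |Real.exp (-ρ₀ ^ 2 * t) - T ℓ| ≤ 2 * Kρ * t ^ n := by
      rw [hTeq]
      calc |Real.exp (-ρ₀ ^ 2 * t) - ∑ m ∈ Finset.range n, (-ρ₀ ^ 2 * t) ^ m / (Nat.factorial m : ℝ)|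
          ≤ |(-ρ₀ ^ 2 * t)| ^ n * ((n.succ : ℝ) / ((n.factorial : ℝ) * n)) := hb1
        _ ≤ |(-ρ₀ ^ 2 * t)| ^ n * 2 :=
            mul_le_mul_of_nonneg_left hfac (by positivity)
        _ = (ρ₀ ^ 2 * t) ^ n * 2 := by rw [habs]
        _ ≤ Kρ * t ^ n * 2 := mul_le_mul_of_nonneg_right hpow (by norm_num)
        _ = 2 * Kρ * t ^ n := by ring
    have hcomb : t ^ n * t ^ ((ℓ : ℝ) - (D : ℝ)) = τ := by
      rw [← Real.rpow_natCast t n, ← Real.rpow_add ht0, hτ]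
      congr 1
      rw [hn, Nat.cast_sub (by omega)]
      push_cast
      ring
    rw [abs_mul, abs_mul, abs_of_pos (Real.rpow_pos_of_pos ht0 _)]
    calc |b ℓ| * |Real.exp (-ρ₀ ^ 2 * t) - T ℓ| * t ^ ((ℓ : ℝ) - (D : ℝ))
        ≤ |b ℓ| * (2 * Kρ * t ^ n) * t ^ ((ℓ : ℝ) - (D : ℝ)) :=
          mul_le_mul_of_nonneg_right
            (mul_le_mul_of_nonneg_left hrem (abs_nonneg _))
            (Real.rpow_pos_of_pos ht0 _).le
      _ = 2 * Kρ * |b ℓ| * (t ^ n * t ^ ((ℓ : ℝ) - (D : ℝ))) := by ring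
      _ = 2 * Kρ * |b ℓ| * τ := by rw [hcomb]
  have hterm2 : ∀ ℓ ∈ Finset.Ico (N + 1) D,
      |b ℓ * Real.exp (-ρ₀ ^ 2 * t) * t ^ ((ℓ : ℝ) - (D : ℝ))| ≤ |b ℓ| * τ := by
    intro ℓ hℓ
    have hℓ1 : N + 1 ≤ ℓ := (Finset.mem_Ico.mp hℓ).1
    have hmono : t ^ ((ℓ : ℝ) - (D : ℝ)) ≤ τ := by
      rw [hτ]
      apply Real.rpow_le_rpow_of_exponent_ge ht0 ht1
      have : ((N : ℝ) + 1) ≤ (ℓ : ℝ) := by exact_mod_cast hℓ1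
      linarith
    rw [abs_mul, abs_mul, abs_of_pos (Real.exp_pos _),
      abs_of_pos (Real.rpow_pos_of_pos ht0 _)]
    have h6 : (0 : ℝ) < t ^ ((ℓ : ℝ) - (D : ℝ)) := Real.rpow_pos_of_pos ht0 _
    rw [mul_assoc]
    calc |b ℓ| * (Real.exp (-ρ₀ ^ 2 * t) * t ^ ((ℓ : ℝ) - (D : ℝ)))
        ≤ |b ℓ| * (1 * τ) :=
          mul_le_mul_of_nonneg_left
            (mul_le_mul hexple hmono h6.le zero_le_one) (abs_nonneg _)
      _ = |b ℓ| * τ := by ring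
  have hτ1 : 1 ≤ τ := by
    have h0 : t ^ ((N : ℝ) + 1 - (D : ℝ)) ≥ t ^ (0 : ℝ) := by
      apply Real.rpow_le_rpow_of_exponent_ge ht0 ht1
      have : ((N : ℝ) + 1) ≤ (D : ℝ) := by exact_mod_cast hND
      linarith
    rw [Real.rpow_zero] at h0
    exact h0
  have hterm3 : |Real.exp (-ρ₀ ^ 2 * t) * ∑ j ∈ Finset.range D, a2 j * E j| ≤ CE * τ := by
    have h7 : |∑ j ∈ Finset.range D, a2 j * E j| ≤ CE := by
      calc |∑ j ∈ Finset.range D, a2 j * E j| ≤ ∑ j ∈ Finset.range D, |a2 j * E j| :=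
            Finset.abs_sum_le_sum_abs _ _
        _ ≤ CE := by
            rw [hCE]
            refine Finset.sum_le_sum fun j _ => ?_
            rw [abs_mul]
            exact mul_le_mul_of_nonneg_left (hEbd j) (abs_nonneg _)
    have hCEnn : 0 ≤ CE := by
      rw [hCE]
      exact Finset.sum_nonneg fun j _ => mul_nonneg (abs_nonneg _) (hC j).1
    rw [abs_mul, abs_of_pos (Real.exp_pos _)]
    calc Real.exp (-ρ₀ ^ 2 * t) * |∑ j ∈ Finset.range D, a2 j * E j|
        ≤ 1 * CE := by nlinarith [Real.exp_pos (-ρ₀ ^ 2 * t), abs_nonneg (∑ j ∈ Finset.range D, a2 j * E j)]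
      _ = CE * 1 := by ring
      _ ≤ CE * τ := mul_le_mul_of_nonneg_left hτ1 hCEnn
  -- conclude
  rw [Real.norm_eq_abs, Real.norm_eq_abs, hfinal, abs_of_pos hτpos]
  have hA : |∑ ℓ ∈ Finset.range (N + 1),
        b ℓ * (Real.exp (-ρ₀ ^ 2 * t) - T ℓ) * t ^ ((ℓ : ℝ) - (D : ℝ))|
      ≤ (∑ ℓ ∈ Finset.range (N + 1), 2 * Kρ * |b ℓ|) * τ := by
    calc |∑ ℓ ∈ Finset.range (N + 1),
          b ℓ * (Real.exp (-ρ₀ ^ 2 * t) - T ℓ) * t ^ ((ℓ : ℝ) - (D : ℝ))|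
        ≤ ∑ ℓ ∈ Finset.range (N + 1),
            |b ℓ * (Real.exp (-ρ₀ ^ 2 * t) - T ℓ) * t ^ ((ℓ : ℝ) - (D : ℝ))| :=
          Finset.abs_sum_le_sum_abs _ _
      _ ≤ ∑ ℓ ∈ Finset.range (N + 1), 2 * Kρ * |b ℓ| * τ := Finset.sum_le_sum hterm1
      _ = (∑ ℓ ∈ Finset.range (N + 1), 2 * Kρ * |b ℓ|) * τ := (Finset.sum_mul _ _ _).symm
  have hB : |∑ ℓ ∈ Finset.Ico (N + 1) D,
        b ℓ * Real.exp (-ρ₀ ^ 2 * t) * t ^ ((ℓ : ℝ) - (D : ℝ))|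
      ≤ (∑ ℓ ∈ Finset.Ico (N + 1) D, |b ℓ|) * τ := by
    calc |∑ ℓ ∈ Finset.Ico (N + 1) D,
          b ℓ * Real.exp (-ρ₀ ^ 2 * t) * t ^ ((ℓ : ℝ) - (D : ℝ))|
        ≤ ∑ ℓ ∈ Finset.Ico (N + 1) D,
            |b ℓ * Real.exp (-ρ₀ ^ 2 * t) * t ^ ((ℓ : ℝ) - (D : ℝ))| :=
          Finset.abs_sum_le_sum_abs _ _
      _ ≤ ∑ ℓ ∈ Finset.Ico (N + 1) D, |b ℓ| * τ := Finset.sum_le_sum hterm2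
      _ = (∑ ℓ ∈ Finset.Ico (N + 1) D, |b ℓ|) * τ := (Finset.sum_mul _ _ _).symm
  rw [hK, add_mul, add_mul]
  set A := ∑ ℓ ∈ Finset.range (N + 1),
      b ℓ * (Real.exp (-ρ₀ ^ 2 * t) - T ℓ) * t ^ ((ℓ : ℝ) - (D : ℝ))
  set B := ∑ ℓ ∈ Finset.Ico (N + 1) D,
      b ℓ * Real.exp (-ρ₀ ^ 2 * t) * t ^ ((ℓ : ℝ) - (D : ℝ))
  set Cc := Real.exp (-ρ₀ ^ 2 * t) * ∑ j ∈ Finset.range D, a2 j * E j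
  calc |A + B + Cc| ≤ |A + B| + |Cc| := abs_add_le _ _
    _ ≤ |A| + |B| + |Cc| := by linarith [abs_add_le A B]
    _ ≤ _ := by linarith [hA, hB, hterm3]
end

section
/- Let n ≥ 0 be an integer, a_0, a_2, …, a_{2n} real numbers, P(r) = Σ_{j=0}^{n} a_{2j} r^{2j}, and ρ₀ > 0 real, and define F(t) = e^{−ρ₀² t} ∫_ℝ e^{−r² t} P(r) dr for t > 0 and Z(s) = (1/Γ(s)) ∫_0^∞ t^{s−1} F(t) dt for Re s > n+1/2, extended meromorphically to ℂ. Then for every integer k ≥ n, the residue of Z at s = n + 1/2 − k equals Σ_{j=0}^{n} (−1)^{j+n+k} ρ₀^{2(j+k−n)} Γ(j+1/2) a_{2j} / ((j−n+k)! · Γ(n+1/2−k)). -/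
open MeasureTheory Set Filter Asymptotics Topology

private lemma gammaResidue (m : ℕ) :
    Tendsto (fun z : ℂ => (z + m) * Complex.Gamma z) (𝓝[≠] (-(m : ℂ)))
      (𝓝 ((-1) ^ m / m.factorial)) := by
  induction m with
  | zero => simpa using Complex.tendsto_self_mul_Gamma_nhds_zero
  | succ m ih =>
    have hne : (-(((m:ℂ)) + 1)) ≠ 0 := by
      intro h
      have : ((m:ℂ)) + 1 = 0 := by linear_combination -h
      exact_mod_cast Nat.cast_add_one_ne_zero m this
    have hmap : Tendsto (fun z : ℂ => z + 1) (𝓝[≠] (-((m:ℂ) + 1))) (𝓝[≠] (-(m : ℂ))) := by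
      rw [tendsto_nhdsWithin_iff]
      constructor
      · have : Tendsto (fun z : ℂ => z + 1) (𝓝 (-((m:ℂ) + 1))) (𝓝 (-((m:ℂ) + 1) + 1)) :=
          (continuous_id.add continuous_const).continuousAt
        have h2 : -((m:ℂ) + 1) + 1 = -(m:ℂ) := by ring
        rw [h2] at this
        exact this.mono_left nhdsWithin_le_nhds
      · filter_upwards [self_mem_nhdsWithin] with z hz
        intro h
        apply hz
        have : z + 1 = -(m:ℂ) := h
        simp only [mem_singleton_iff]
        linear_combination this
    have h1 : Tendsto (fun z : ℂ => (z + 1 + m) * Complex.Gamma (z + 1))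
        (𝓝[≠] (-((m:ℂ) + 1))) (𝓝 ((-1) ^ m / m.factorial)) := ih.comp hmap
    have h2 : Tendsto (fun z : ℂ => z⁻¹) (𝓝[≠] (-((m:ℂ) + 1))) (𝓝 (-((m:ℂ) + 1))⁻¹) :=
      (continuousAt_inv₀ hne).tendsto.mono_left nhdsWithin_le_nhds
    have h3 := h1.mul h2
    have key : Tendsto (fun z : ℂ => (z + (m + 1)) * Complex.Gamma z)
        (𝓝[≠] (-((m:ℂ) + 1))) (𝓝 ((-1) ^ m / m.factorial * (-((m:ℂ) + 1))⁻¹)) := by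
      refine h3.congr' ?_
      have : ∀ᶠ z in 𝓝[≠] (-((m:ℂ) + 1)), z ≠ 0 := by
        have : {(0:ℂ)}ᶜ ∈ 𝓝 (-((m:ℂ) + 1)) := isOpen_compl_singleton.mem_nhds (by simpa using hne)
        exact eventually_nhdsWithin_of_eventually_nhds this
      filter_upwards [this] with z hz
      rw [Complex.Gamma_add_one z hz]
      field_simp
      ring
    have hval : (-1:ℂ) ^ m / m.factorial * (-((m:ℂ) + 1))⁻¹
        = (-1) ^ (m+1) / (m+1).factorial := by
      have h1 : ((m:ℂ) + 1) ≠ 0 := Nat.cast_add_one_ne_zero m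
      have h2 : ((m.factorial : ℂ)) ≠ 0 := Nat.cast_ne_zero.mpr m.factorial_ne_zero
      rw [Nat.factorial_succ, pow_succ]
      push_cast
      rw [inv_neg]
      field_simp
    rw [hval] at key
    have hcast : (-(((m+1:ℕ)):ℂ)) = -((m:ℂ)+1) := by push_cast; ring
    rw [hcast]
    convert key using 2 with z
    push_cast
    ring

private lemma integrableOn_cpow_mul_exp' {a : ℂ} {r : ℝ} (ha : 0 < a.re) (hr : 0 < r) :
    IntegrableOn (fun t : ℝ => (t : ℂ) ^ (a - 1) * Complex.exp (-(r * t))) (Ioi 0) := by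
  have h0 := Complex.GammaIntegral_convergent ha
  rw [← mul_zero r, ← integrableOn_Ioi_comp_mul_left_iff _ _ hr] at h0
  have hrc : ((r:ℂ)) ^ (a - 1) ≠ 0 := by
    rw [Ne, Complex.cpow_eq_zero_iff, not_and_or]
    exact Or.inl (Complex.ofReal_ne_zero.mpr hr.ne')
  refine (IntegrableOn.congr_fun (h0.const_mul (((r:ℂ)) ^ (a-1))⁻¹)
    (fun t (ht : 0 < t) => ?_) measurableSet_Ioi)
  show (_)⁻¹ * _ = _
  rw [Complex.ofReal_mul, Complex.mul_cpow_ofReal_nonneg hr.le ht.le,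
    Complex.ofReal_exp, Complex.ofReal_neg, Complex.ofReal_mul]
  field_simp

private lemma gaussMoment (j : ℕ) {t : ℝ} (ht : 0 < t) :
    ∫ x : ℝ, x ^ (2*j) * Real.exp (-t * x^2)
      = Real.Gamma ((j:ℝ) + 1/2) * t ^ (-((j:ℝ) + 1/2)) := by
  have heven : ∀ x : ℝ, |x| ^ (2*j) * Real.exp (-t * |x|^2) = x ^ (2*j) * Real.exp (-t*x^2) := by
    intro x
    rw [(even_two_mul j).pow_abs, sq_abs]
  have habs := integral_comp_abs (f := fun x => x ^ (2*j) * Real.exp (-t * x^2))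
  simp_rw [heven] at habs
  rw [habs]
  have hIoi : ∫ x in Ioi (0:ℝ), x ^ (2*j) * Real.exp (-t * x^2)
      = ∫ x in Ioi (0:ℝ), x ^ ((2*j : ℕ):ℝ) * Real.exp (-t * x ^ (2:ℝ)) := by
    refine setIntegral_congr_fun measurableSet_Ioi (fun x hx => ?_)
    rw [Real.rpow_natCast, Real.rpow_two]
  rw [hIoi, integral_rpow_mul_exp_neg_mul_rpow two_pos (lt_of_lt_of_le neg_one_lt_zero (Nat.cast_nonneg _)) ht]
  have h1 : (-(((2*j:ℕ):ℝ) + 1) / 2) = -((j:ℝ) + 1/2) := by push_cast; ring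
  have h2 : ((((2*j:ℕ):ℝ)) + 1) / 2 = (j:ℝ) + 1/2 := by push_cast; ring
  rw [h1, h2]
  ring

private lemma innerIntegral (n : ℕ) (a2 : ℕ → ℝ) {t : ℝ} (ht : 0 < t) :
    (∫ r : ℝ, Real.exp (-r^2 * t) * ∑ j ∈ Finset.range (n+1), a2 j * r^(2*j))
      = ∑ j ∈ Finset.range (n+1), a2 j * Real.Gamma ((j:ℝ)+1/2) * t ^ (-((j:ℝ)+1/2)) := by
  have hfun : ∀ r : ℝ, Real.exp (-r^2*t) * ∑ j ∈ Finset.range (n+1), a2 j * r^(2*j)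
      = ∑ j ∈ Finset.range (n+1), a2 j * (r^(2*j) * Real.exp (-t * r^2)) := by
    intro r
    have h : -r^2*t = -t*r^2 := by ring
    rw [Finset.mul_sum, h]
    exact Finset.sum_congr rfl fun j _ => by ring
  simp_rw [hfun]
  have hint : ∀ j : ℕ, Integrable (fun r : ℝ => a2 j * (r^(2*j) * Real.exp (-t * r^2))) := by
    intro j
    have h0 := integrable_rpow_mul_exp_neg_mul_sq ht
      (s := ((2*j : ℕ):ℝ)) (lt_of_lt_of_le neg_one_lt_zero (Nat.cast_nonneg _))
    have h1 : Integrable (fun x : ℝ => x ^ (2*j) * Real.exp (-t * x^2)) := by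
      refine h0.congr (Eventually.of_forall fun x => ?_)
      simp only
      rw [Real.rpow_natCast]
    exact h1.const_mul (a2 j)
  rw [integral_finset_sum _ (fun j _ => hint j)]
  refine Finset.sum_congr rfl fun j _ => ?_
  rw [integral_const_mul, gaussMoment j ht, mul_assoc]

private lemma mellinStep (n : ℕ) (c : ℕ → ℝ) {ρ : ℝ} (hρ : 0 < ρ) {s : ℂ}
    (hs : (n:ℝ) + 1/2 < s.re) :
    (∫ t in Ioi (0:ℝ), (t:ℂ)^(s-1) *
      ((Real.exp (-ρ^2*t) * ∑ j ∈ Finset.range (n+1), c j * t ^ (-((j:ℝ)+1/2)) : ℝ):ℂ))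
    = ∑ j ∈ Finset.range (n+1),
        (c j : ℂ) * ((1/((ρ^2 : ℝ)) : ℂ) ^ (s - ((j:ℂ)+1/2)) *
          Complex.Gamma (s - ((j:ℂ)+1/2))) := by
  have hρ2 : 0 < ρ^2 := by positivity
  have hre : ∀ j, j ∈ Finset.range (n+1) → 0 < (s - ((j:ℂ)+1/2)).re := by
    intro j hj
    have hj' : (j:ℝ) ≤ n := by
      exact_mod_cast Nat.lt_succ_iff.mp (Finset.mem_range.mp hj)
    simp only [Complex.sub_re, Complex.add_re, Complex.natCast_re, Complex.ofReal_re]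
    have : ((1:ℂ)/2).re = 1/2 := by norm_num
    rw [this]
    linarith
  rw [setIntegral_congr_fun measurableSet_Ioi
    (g := fun t : ℝ => ∑ j ∈ Finset.range (n+1),
      (c j : ℂ) * ((t:ℂ) ^ ((s - ((j:ℂ)+1/2)) - 1) * Complex.exp (-(((ρ^2:ℝ):ℂ) * t))))
    (fun t (ht : 0 < t) => ?_)]
  · rw [integral_finset_sum _ (fun j hj =>
      ((integrableOn_cpow_mul_exp' (hre j hj) hρ2).const_mul _))]
    refine Finset.sum_congr rfl fun j hj => ?_
    rw [integral_const_mul, Complex.integral_cpow_mul_exp_neg_mul_Ioi (hre j hj) hρ2]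
  · have htne : (t:ℂ) ≠ 0 := Complex.ofReal_ne_zero.mpr ht.ne'
    have hexp : ((Real.exp (-ρ^2*t) : ℝ) : ℂ) = Complex.exp (-(((ρ^2:ℝ):ℂ) * t)) := by
      rw [show (-(((ρ^2:ℝ):ℂ) * (t:ℂ))) = ((-ρ^2*t : ℝ) : ℂ) by push_cast; ring,
        Complex.ofReal_exp]
    simp only [Complex.ofReal_mul, Complex.ofReal_sum, Finset.mul_sum]
    refine Finset.sum_congr rfl fun j hj => ?_
    have hcp : ((t ^ (-((j:ℝ)+1/2)) : ℝ) : ℂ) = (t:ℂ) ^ ((-((j:ℝ)+1/2) : ℝ) : ℂ) :=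
      Complex.ofReal_cpow ht.le _
    rw [hcp, hexp,
      show (s - ((j:ℂ)+1/2)) - 1 = (s-1) + ((-((j:ℝ)+1/2) : ℝ) : ℂ) by push_cast; ring,
      Complex.cpow_add _ _ htne]
    ring

private lemma half_add_ne_int (x y : ℤ) : (x:ℝ) + 1/2 ≠ (y:ℝ) := by
  intro h
  have h2 : ((2*x+1 : ℤ) : ℝ) = ((2*y : ℤ) : ℝ) := by push_cast; linarith
  have h3 : (2*x+1 : ℤ) = 2*y := by exact_mod_cast h2
  omega

private lemma analyticAt_Gamma' {z : ℂ} (hz : ∀ m : ℕ, z ≠ -m) :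
    AnalyticAt ℂ Complex.Gamma z := by
  have h1 : AnalyticAt ℂ (fun w => (Complex.Gamma w)⁻¹) z :=
    (Complex.differentiable_one_div_Gamma.differentiableOn.analyticOnNhd
      isOpen_univ) z (mem_univ z)
  have h2 := h1.inv (inv_ne_zero (Complex.Gamma_ne_zero hz))
  simpa only [Pi.inv_def, inv_inv] using h2

/-- Residues of the odd-dimensional zeta function at `s = n+1/2-k` for `k ≥ n`:
`Res = Σ_{j=0}^n (-1)^{j+n+k} ρ₀^{2(j+k-n)} Γ(j+1/2) a_{2j} / ((j-n+k)! Γ(n+1/2-k))`. -/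
theorem zeta_function_odd_dimensional_residues_low
    (n : ℕ) (a2 : ℕ → ℝ) (ρ₀ : ℝ) (hρ : 0 < ρ₀) (Z : ℂ → ℂ)
    (hZ1 : ∀ s : ℂ, (n : ℝ) + 1 / 2 < s.re →
      Z s = (Complex.Gamma s)⁻¹ *
        ∫ t in Ioi (0 : ℝ), (t : ℂ) ^ (s - 1) *
          ((Real.exp (-ρ₀ ^ 2 * t) *
            ∫ r : ℝ, Real.exp (-r ^ 2 * t) *
              ∑ j ∈ Finset.range (n + 1), a2 j * r ^ (2 * j) : ℝ) : ℂ))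
    (hZ2 : ∀ s : ℂ, (¬∃ m : ℕ, s = (((n : ℝ) + 1 / 2 - (m : ℝ) : ℝ) : ℂ)) →
      AnalyticAt ℂ Z s)
    (k : ℕ) (hk : n ≤ k) :
    Tendsto (fun s : ℂ => (s - (((n : ℝ) + 1 / 2 - (k : ℝ) : ℝ) : ℂ)) * Z s)
      (𝓝[≠] (((n : ℝ) + 1 / 2 - (k : ℝ) : ℝ) : ℂ))
      (𝓝 (((∑ j ∈ Finset.range (n + 1),
        (-1) ^ (j + n + k) * ρ₀ ^ (2 * (j + k - n)) * Real.Gamma ((j : ℝ) + 1 / 2) * a2 j /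
          ((Nat.factorial (j + k - n) : ℝ) *
            Real.Gamma ((n : ℝ) + 1 / 2 - (k : ℝ))) : ℝ) : ℂ))) := by
  set s₀ : ℂ := (((n : ℝ) + 1 / 2 - (k : ℝ) : ℝ) : ℂ) with hs₀
  set b : ℂ := (1/((ρ₀^2 : ℝ)) : ℂ) with hb
  have hbne : b ≠ 0 := by
    rw [hb]
    simp only [one_div, ne_eq, inv_eq_zero, Complex.ofReal_eq_zero]
    positivity
  set c : ℕ → ℝ := fun j => a2 j * Real.Gamma ((j:ℝ)+1/2) with hc
  set W : ℂ → ℂ := fun s => (Complex.Gamma s)⁻¹ * ∑ j ∈ Finset.range (n+1),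
    (c j : ℂ) * (b ^ (s - ((j:ℂ)+1/2)) * Complex.Gamma (s - ((j:ℂ)+1/2))) with hW
  -- Z = W on the half plane
  have hZW : ∀ s : ℂ, (n:ℝ) + 1/2 < s.re → Z s = W s := by
    intro s hs
    rw [hZ1 s hs, hW]
    congr 1
    rw [setIntegral_congr_fun measurableSet_Ioi
      (g := fun t : ℝ => (t:ℂ)^(s-1) *
        ((Real.exp (-ρ₀^2*t) * ∑ j ∈ Finset.range (n+1), c j * t ^ (-((j:ℝ)+1/2)) : ℝ):ℂ))
      (fun t (ht : 0 < t) => by rw [innerIntegral n a2 ht])]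
    exact mellinStep n c hρ hs
  -- the pole set
  set Q : Set ℂ := {s | ∃ m : ℤ, s = (((n:ℝ) + 1/2 - (m:ℝ) : ℝ) : ℂ)} with hQ
  have hQc : Q.Countable := by
    have : Q = Set.range (fun m : ℤ => ((((n:ℝ) + 1/2 - (m:ℝ) : ℝ) : ℂ))) := by
      ext z
      simp [hQ, Set.mem_range, eq_comm]
    rw [this]
    exact countable_range _
  have hpre : IsPreconnected Qᶜ :=
    (hQc.isPathConnected_compl_of_one_lt_rank
      (Complex.rank_real_complex ▸ Nat.one_lt_ofNat)).isConnected.isPreconnected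
  -- analyticity of Z on Qᶜ
  have hZa : AnalyticOnNhd ℂ Z Qᶜ := by
    intro s hs
    refine hZ2 s ?_
    rintro ⟨m, rfl⟩
    exact hs ⟨(m:ℤ), by push_cast; ring_nf⟩
  -- analyticity of W on Qᶜ
  have hsubc : ∀ w x : ℂ, AnalyticAt ℂ (fun z : ℂ => z - w) x := by
    intro w x
    exact analyticAt_id.sub analyticAt_const
  have hbpow : ∀ w s : ℂ, AnalyticAt ℂ (fun z : ℂ => b ^ (z - w)) s := by
    intro w s
    have hfun : (fun z : ℂ => b ^ (z - w)) = fun z : ℂ => Complex.exp (Complex.log b * (z - w)) := by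
      funext z
      rw [Complex.cpow_def_of_ne_zero hbne]
    rw [hfun]
    have hexp : AnalyticAt ℂ Complex.exp (Complex.log b * (s - w)) :=
      (Complex.differentiable_exp.differentiableOn.analyticOnNhd isOpen_univ) _ (mem_univ _)
    have hc2 := AnalyticAt.comp (f := fun z : ℂ => Complex.log b * (z - w))
      (g := Complex.exp) hexp (analyticAt_const.mul (hsubc w s))
    exact hc2
  have hWa : AnalyticOnNhd ℂ W Qᶜ := by
    intro s hs
    refine AnalyticAt.mul ?_ ?_
    · exact (Complex.differentiable_one_div_Gamma.differentiableOn.analyticOnNhd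
        isOpen_univ) s (mem_univ s)
    · refine Finset.analyticAt_fun_sum _ (fun j hj => ?_)
      refine analyticAt_const.mul (AnalyticAt.mul (hbpow _ _) ?_)
      have hpole : ∀ m : ℕ, s - ((j:ℂ)+1/2) ≠ -m := by
        intro m hm
        apply hs
        refine ⟨(n:ℤ) - j + m, ?_⟩
        have : s = ((j:ℂ)+1/2) - m := by linear_combination hm
        rw [this]
        push_cast
        ring
      have hc3 := AnalyticAt.comp (f := fun z : ℂ => z - ((j:ℂ)+1/2))
        (g := Complex.Gamma) (analyticAt_Gamma' hpole) (hsubc ((j:ℂ)+1/2) s)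
      exact hc3
  -- identity on Qᶜ
  have hz₀mem : ((n:ℂ)+1) ∈ Qᶜ := by
    intro hmem
    obtain ⟨m, hm⟩ := hmem
    have hre : (n:ℝ) + 1 = (n:ℝ) + 1/2 - m := by
      have := congrArg Complex.re hm
      simpa using this
    exact half_add_ne_int ((n:ℤ) - m) ((n:ℤ) + 1) (by push_cast; linarith) |>.elim
  have heq : Z =ᶠ[𝓝 ((n:ℂ)+1)] W := by
    have hopen : IsOpen {s : ℂ | (n:ℝ) + 1/2 < s.re} :=
      isOpen_lt continuous_const Complex.continuous_re
    have hmem : ((n:ℂ)+1) ∈ {s : ℂ | (n:ℝ) + 1/2 < s.re} := by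
      simp only [mem_setOf_eq, Complex.add_re, Complex.natCast_re, Complex.one_re]
      linarith
    filter_upwards [hopen.mem_nhds hmem] with s hs
    exact hZW s hs
  have hEqOn : EqOn Z W Qᶜ :=
    hZa.eqOn_of_preconnected_of_eventuallyEq hWa hpre hz₀mem heq
  -- limit of (s - s₀) * W s
  have hs₀m : ∀ j : ℕ, j ∈ Finset.range (n+1) →
      s₀ - ((j:ℂ)+1/2) = -(((j + k - n : ℕ)):ℂ) := by
    intro j hj
    rw [Nat.cast_sub (by omega)]
    rw [hs₀]
    push_cast
    ring
  have hWlim : Tendsto (fun s : ℂ => (s - s₀) * W s) (𝓝[≠] s₀)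
      (𝓝 ((Complex.Gamma s₀)⁻¹ * ∑ j ∈ Finset.range (n+1),
        (c j : ℂ) * (b ^ (s₀ - ((j:ℂ)+1/2)) *
          ((-1) ^ (j + k - n) / ((j + k - n).factorial : ℂ))))) := by
    have hrw : ∀ s : ℂ, (s - s₀) * W s = (Complex.Gamma s)⁻¹ *
        ∑ j ∈ Finset.range (n+1), (c j : ℂ) * (b ^ (s - ((j:ℂ)+1/2)) *
          ((s - s₀) * Complex.Gamma (s - ((j:ℂ)+1/2)))) := by
      intro s
      rw [hW]
      simp only [Finset.mul_sum]
      exact Finset.sum_congr rfl fun j _ => by ring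
    refine Tendsto.congr (fun s => (hrw s).symm) ?_
    refine Tendsto.mul ?_ (tendsto_finset_sum _ (fun j hj => ?_))
    · exact (Complex.differentiable_one_div_Gamma.continuous.continuousAt).tendsto.mono_left
        nhdsWithin_le_nhds
    · refine Tendsto.const_mul _ (Tendsto.mul ?_ ?_)
      · exact ((hbpow ((j:ℂ)+1/2) s₀).continuousAt.tendsto).mono_left nhdsWithin_le_nhds
      · have hφ : Tendsto (fun s : ℂ => s - ((j:ℂ)+1/2)) (𝓝[≠] s₀)
            (𝓝[≠] (-(((j + k - n : ℕ)):ℂ))) := by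
          rw [tendsto_nhdsWithin_iff]
          constructor
          · have h1 : Tendsto (fun s : ℂ => s - ((j:ℂ)+1/2)) (𝓝 s₀)
                (𝓝 (s₀ - ((j:ℂ)+1/2))) := (continuous_id.sub continuous_const).continuousAt
            rw [hs₀m j hj] at h1
            exact h1.mono_left nhdsWithin_le_nhds
          · filter_upwards [self_mem_nhdsWithin] with z hz h
            apply hz
            simp only [mem_singleton_iff] at h ⊢
            have h2 := hs₀m j hj
            linear_combination h - h2
        have h3 := (gammaResidue (j + k - n)).comp hφ
        refine h3.congr (fun s => ?_)
        simp only [Function.comp]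
        congr 1
        have h2 := hs₀m j hj
        linear_combination h2
  -- value identification
  have hΓne : Real.Gamma ((n:ℝ) + 1/2 - (k:ℝ)) ≠ 0 := by
    refine Real.Gamma_ne_zero (fun m => ?_)
    intro h
    exact half_add_ne_int ((n:ℤ) - (k:ℤ)) (-(m:ℤ)) (by push_cast; push_cast at h; linarith)
  have hbp : ∀ j ∈ Finset.range (n+1),
      b ^ (s₀ - ((j:ℂ)+1/2)) = ((ρ₀ ^ (2*(j+k-n)) : ℝ) : ℂ) := by
    intro j hj
    rw [hs₀m j hj,
      show (-(((j+k-n : ℕ)):ℂ)) = (((-(j+k-n : ℕ) : ℤ)) : ℂ) by push_cast; ring,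
      Complex.cpow_intCast, zpow_neg, zpow_natCast, hb]
    rw [one_div, inv_pow, inv_inv]
    push_cast
    rw [← pow_mul]
  have hVeq : (Complex.Gamma s₀)⁻¹ * (∑ j ∈ Finset.range (n+1),
        (c j : ℂ) * (b ^ (s₀ - ((j:ℂ)+1/2)) *
          ((-1) ^ (j + k - n) / ((j + k - n).factorial : ℂ))))
      = ((∑ j ∈ Finset.range (n + 1),
        (-1) ^ (j + n + k) * ρ₀ ^ (2 * (j + k - n)) * Real.Gamma ((j : ℝ) + 1 / 2) * a2 j /
          ((Nat.factorial (j + k - n) : ℝ) *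
            Real.Gamma ((n : ℝ) + 1 / 2 - (k : ℝ))) : ℝ) : ℂ) := by
    have hGs₀ : Complex.Gamma s₀ = ((Real.Gamma ((n:ℝ) + 1/2 - (k:ℝ)) : ℝ) : ℂ) := by
      rw [hs₀, Complex.Gamma_ofReal]
    rw [hGs₀, Complex.ofReal_sum, Finset.mul_sum]
    refine Finset.sum_congr rfl fun j hj => ?_
    rw [hbp j hj, hc]
    have hfacne : ((j + k - n).factorial : ℝ) ≠ 0 :=
      Nat.cast_ne_zero.mpr (j + k - n).factorial_ne_zero
    have hpow : ((-1:ℝ)) ^ (j + n + k) = (-1) ^ (j + k - n) := by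
      rw [show j + n + k = (j + k - n) + 2*n by omega, pow_add, pow_mul]
      norm_num
    simp only
    rw [hpow]
    push_cast
    field_simp
  rw [hVeq] at hWlim
  refine Tendsto.congr' ?_ hWlim
  filter_upwards [mem_nhdsWithin_of_mem_nhds (Metric.ball_mem_nhds s₀ one_pos),
    self_mem_nhdsWithin] with s hball hne
  have hsQ : s ∈ Qᶜ := by
    rintro ⟨m, hm⟩
    have hdist : dist s s₀ < 1 := Metric.mem_ball.mp hball
    rw [hm, hs₀, Complex.isometry_ofReal.dist_eq] at hdist
    have hmk : m ≠ (k : ℤ) := by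
      rintro rfl
      apply hne
      simp only [mem_singleton_iff]
      rw [hm, hs₀]
      norm_num
    have h1 : (1:ℝ) ≤ |(((k:ℤ) - m : ℤ) : ℝ)| := by
      exact_mod_cast Int.one_le_abs (sub_ne_zero.mpr (fun h => hmk h.symm))
    rw [Real.dist_eq] at hdist
    have h2 : ((n:ℝ) + 1/2 - m) - ((n:ℝ) + 1/2 - k) = (((k:ℤ) - m : ℤ) : ℝ) := by
      push_cast
      ring
    rw [h2] at hdist
    linarith
  rw [hEqOn hsQ]
end

section
/- Let n ≥ 0 be an integer, a_0, a_2, …, a_{2n} real numbers, P(r) = Σ_{j=0}^{n} a_{2j} r^{2j}, and ρ₀ > 0 real, and define F(t) = e^{−ρ₀² t} ∫_ℝ e^{−r² t} P(r) dr for t > 0 and Z(s) = (1/Γ(s)) ∫_0^∞ t^{s−1} F(t) dt for Re s > n+1/2, extended meromorphically to ℂ. Then Z is holomorphic at every nonpositive integer and Z(−k) = 0 for every integer k ≥ 0. -/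
open MeasureTheory Set Filter Asymptotics Topology

noncomputable def zetaCC (j : ℕ) : ℝ := (2 * (j : ℝ) + 1) / 2

lemma zetaCC_pos (j : ℕ) : 0 < zetaCC j := by unfold zetaCC; positivity

lemma zeta_moment (t : ℝ) (ht : 0 < t) (j : ℕ) :
    ∫ r : ℝ, Real.exp (-r ^ 2 * t) * r ^ (2 * j)
      = t ^ (-zetaCC j) * Real.Gamma (zetaCC j) := by
  have h1 : ∀ r : ℝ, Real.exp (-r ^ 2 * t) * r ^ (2 * j)
      = (fun x : ℝ => x ^ (2 * (j : ℝ)) * Real.exp (-t * x ^ (2 : ℝ))) |r| := by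
    intro r
    have e1 : |r| ^ (2 * (j : ℝ)) = r ^ (2 * j) := by
      rw [show (2 * (j : ℝ)) = ((2 * j : ℕ) : ℝ) by push_cast; ring,
        Real.rpow_natCast, (even_two_mul j).pow_abs]
    have e2 : |r| ^ (2 : ℝ) = r ^ 2 := by
      rw [show ((2 : ℝ)) = ((2 : ℕ) : ℝ) by norm_num, Real.rpow_natCast, sq_abs]
    simp only [e1, e2]
    rw [show -t * r ^ 2 = -r ^ 2 * t by ring]
    ring
  simp_rw [h1]
  have h2 : ∫ r : ℝ, |r| ^ (2 * (j : ℝ)) * Real.exp (-t * |r| ^ (2 : ℝ))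
      = 2 * ∫ x in Ioi (0 : ℝ), x ^ (2 * (j : ℝ)) * Real.exp (-t * x ^ (2 : ℝ)) :=
    integral_comp_abs (f := fun x : ℝ => x ^ (2 * (j : ℝ)) * Real.exp (-t * x ^ (2 : ℝ)))
  rw [h2, integral_rpow_mul_exp_neg_mul_rpow (q := 2 * (j : ℝ)) two_pos (neg_one_lt_zero.trans_le (by positivity)) ht,
    show -(2 * (j : ℝ) + 1) / 2 = -zetaCC j by unfold zetaCC; ring,
    show (2 * (j : ℝ) + 1) / 2 = zetaCC j from rfl]
  ring

lemma zeta_cpow_exp_integrable {a : ℂ} {b : ℝ} (ha : 0 < a.re) (hb : 0 < b) :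
    IntegrableOn (fun t : ℝ => (t : ℂ) ^ (a - 1) * Complex.exp (-(b * t))) (Ioi 0) := by
  have hreal : IntegrableOn (fun t : ℝ => t ^ (a.re - 1) * Real.exp (-b * t)) (Ioi 0) := by
    have := integrableOn_rpow_mul_exp_neg_mul_rpow (p := 1) (s := a.re - 1) (b := b)
      (by linarith) one_pos hb
    refine this.congr_fun (fun t ht => ?_) measurableSet_Ioi
    simp only [Real.rpow_one]
  refine Integrable.mono' hreal ?_ ?_
  · refine (ContinuousOn.aestronglyMeasurable ?_ measurableSet_Ioi)
    refine ContinuousOn.mul (fun t ht => ?_) (Continuous.continuousOn (by fun_prop))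
    exact ((continuousAt_cpow_const (Complex.ofReal_mem_slitPlane.2 ht)).comp
      Complex.continuous_ofReal.continuousAt).continuousWithinAt
  · filter_upwards [ae_restrict_mem measurableSet_Ioi] with t ht
    rw [norm_mul,
      Complex.norm_cpow_eq_rpow_re_of_pos ht, Complex.norm_exp]
    simp only [Complex.sub_re, Complex.one_re, Complex.neg_re, Complex.mul_re,
      Complex.ofReal_re, Complex.ofReal_im, mul_zero, sub_zero]
    rw [show -(b * t) = -b * t by ring]

lemma zeta_term_eq {b d : ℝ} {s : ℂ} (K : ℝ) {t : ℝ} (ht : 0 < t) :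
    (t : ℂ) ^ (s - 1) * ((Real.exp (-b * t) * (K * (t ^ (-d) * Real.Gamma d)) : ℝ) : ℂ)
      = ((K * Real.Gamma d : ℝ) : ℂ) * ((t : ℂ) ^ ((s - d) - 1) * Complex.exp (-(b * t))) := by
  have h1 : ((t ^ (-d) : ℝ) : ℂ) = (t : ℂ) ^ (-(d : ℂ)) := by
    rw [Complex.ofReal_cpow ht.le]; push_cast; ring_nf
  have h2 : (t : ℂ) ^ ((s - d) - 1) = (t : ℂ) ^ (s - 1) * (t : ℂ) ^ (-(d : ℂ)) := by
    rw [← Complex.cpow_add _ _ (by exact_mod_cast ht.ne')]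
    congr 1; ring
  have h3 : ((Real.exp (-b * t) : ℝ) : ℂ) = Complex.exp (-(b * t)) := by
    rw [Complex.ofReal_exp]; push_cast; ring_nf
  push_cast
  rw [h1, h2, neg_mul]
  ring

lemma zeta_mellin_term {b d : ℝ} (hb : 0 < b) {s : ℂ} (hs : d < s.re) (K : ℝ) :
    ∫ t in Ioi (0 : ℝ), (t : ℂ) ^ (s - 1) *
        ((Real.exp (-b * t) * (K * (t ^ (-d) * Real.Gamma d)) : ℝ) : ℂ)
      = ((K * Real.Gamma d : ℝ) : ℂ) *
        ((1 / (b : ℂ)) ^ (s - d) * Complex.Gamma (s - d)) := by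
  have hre : 0 < (s - (d : ℂ)).re := by
    simp only [Complex.sub_re, Complex.ofReal_re]; linarith
  rw [setIntegral_congr_fun measurableSet_Ioi (fun t ht => zeta_term_eq K ht),
    MeasureTheory.integral_const_mul, Complex.integral_cpow_mul_exp_neg_mul_Ioi hre hb]

lemma zeta_term_integrableOn {b d : ℝ} (hb : 0 < b) {s : ℂ} (hs : d < s.re) (K : ℝ) :
    IntegrableOn (fun t : ℝ => (t : ℂ) ^ (s - 1) *
        ((Real.exp (-b * t) * (K * (t ^ (-d) * Real.Gamma d)) : ℝ) : ℂ)) (Ioi 0) := by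
  have hre : 0 < (s - (d : ℂ)).re := by
    simp only [Complex.sub_re, Complex.ofReal_re]; linarith
  have := (zeta_cpow_exp_integrable hre hb).const_mul ((K * Real.Gamma d : ℝ) : ℂ)
  exact IntegrableOn.congr_fun this (fun t ht => (zeta_term_eq K ht).symm) measurableSet_Ioi

lemma zeta_rint (t : ℝ) (ht : 0 < t) (n : ℕ) (a2 : ℕ → ℝ) :
    (∫ r : ℝ, Real.exp (-r ^ 2 * t) * ∑ j ∈ Finset.range (n + 1), a2 j * r ^ (2 * j))
      = ∑ j ∈ Finset.range (n + 1), a2 j * (t ^ (-zetaCC j) * Real.Gamma (zetaCC j)) := by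
  have hint : ∀ j : ℕ, Integrable (fun r : ℝ =>
      Real.exp (-r ^ 2 * t) * (a2 j * r ^ (2 * j))) := by
    intro j
    have base : Integrable (fun x : ℝ => x ^ (2 * (j : ℝ)) * Real.exp (-t * x ^ 2)) :=
      integrable_rpow_mul_exp_neg_mul_sq ht (neg_one_lt_zero.trans_le (by positivity))
    refine (base.const_mul (a2 j)).congr (Eventually.of_forall fun r => ?_)
    have : (2 * (j : ℝ)) = ((2 * j : ℕ) : ℝ) := by push_cast; ring
    simp only [this, Real.rpow_natCast]
    rw [show -t * r ^ 2 = -r ^ 2 * t by ring]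
    ring
  simp_rw [Finset.mul_sum]
  rw [integral_finset_sum _ (fun j _ => hint j)]
  refine Finset.sum_congr rfl fun j _ => ?_
  simp_rw [mul_left_comm (Real.exp (-_ ^ 2 * t))]
  rw [MeasureTheory.integral_const_mul, zeta_moment t ht j]

lemma zeta_analyticAt_Gamma {w : ℂ} (hw : ∀ m : ℕ, w ≠ -m) :
    AnalyticAt ℂ Complex.Gamma w := by
  have hset : {z : ℂ | ∃ m : ℕ, z = -(m : ℂ)} = (fun k : ℤ => (k : ℂ)) '' (Set.Iic 0) := by
    ext z
    constructor
    · rintro ⟨m, rfl⟩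
      exact ⟨-(m : ℤ), by simp, by push_cast; ring⟩
    · rintro ⟨k, hk, rfl⟩
      refine ⟨(-k).toNat, ?_⟩
      have h2 : ((-k).toNat : ℤ) = -k := Int.toNat_of_nonneg (neg_nonneg.2 hk)
      have h3 : (((-k).toNat : ℤ) : ℂ) = ((-k : ℤ) : ℂ) := by rw [h2]
      push_cast at h3 ⊢
      linear_combination h3
  have hclosed : IsClosed {z : ℂ | ∃ m : ℕ, z = -(m : ℂ)} := by
    have hcomp : (fun k : ℤ => (k : ℂ)) = (fun x : ℝ => (x : ℂ)) ∘ (fun k : ℤ => (k : ℝ)) := by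
      ext k; simp
    rw [hset, hcomp, Set.image_comp]
    exact Complex.isometry_ofReal.isClosedEmbedding.isClosedMap _
      (Int.isClosedEmbedding_coe_real.isClosedMap _ isClosed_Iic)
  have hopen : IsOpen {z : ℂ | ∀ m : ℕ, z ≠ -(m : ℂ)} := by
    have : {z : ℂ | ∀ m : ℕ, z ≠ -(m : ℂ)} = {z : ℂ | ∃ m : ℕ, z = -(m : ℂ)}ᶜ := by
      ext z; simp
    rw [this]
    exact hclosed.isOpen_compl
  refine DifferentiableOn.analyticAt ?_ (hopen.mem_nhds hw)
  exact fun z hz => (Complex.differentiableAt_Gamma z hz).differentiableWithinAt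

/-- The odd-dimensional zeta function is holomorphic at every nonpositive integer
and vanishes there: `Z(-k) = 0` for all `k ∈ ℕ`. -/
theorem zeta_function_odd_dimensional_vanishes_at_nonpositive_integers
    (n : ℕ) (a2 : ℕ → ℝ) (ρ₀ : ℝ) (hρ : 0 < ρ₀) (Z : ℂ → ℂ)
    (hZ1 : ∀ s : ℂ, (n : ℝ) + 1 / 2 < s.re →
      Z s = (Complex.Gamma s)⁻¹ *
        ∫ t in Ioi (0 : ℝ), (t : ℂ) ^ (s - 1) *
          ((Real.exp (-ρ₀ ^ 2 * t) *
            ∫ r : ℝ, Real.exp (-r ^ 2 * t) *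
              ∑ j ∈ Finset.range (n + 1), a2 j * r ^ (2 * j) : ℝ) : ℂ))
    (hZ2 : ∀ s : ℂ, (¬∃ m : ℕ, s = (((n : ℝ) + 1 / 2 - (m : ℝ) : ℝ) : ℂ)) →
      AnalyticAt ℂ Z s) :
    ∀ k : ℕ, AnalyticAt ℂ Z (-(k : ℂ)) ∧ Z (-(k : ℂ)) = 0 := by
  have hb : (0 : ℝ) < ρ₀ ^ 2 := by positivity
  set S : Set ℂ := {s : ℂ | ∃ m : ℕ, s = (((n : ℝ) + 1 / 2 - (m : ℝ) : ℝ) : ℂ)} with hS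
  set g : ℂ → ℂ := fun s => (Complex.Gamma s)⁻¹ * ∑ j ∈ Finset.range (n + 1),
    ((a2 j * Real.Gamma (zetaCC j) : ℝ) : ℂ) *
      ((1 / ((ρ₀ ^ 2 : ℝ) : ℂ)) ^ (s - (zetaCC j : ℂ)) *
        Complex.Gamma (s - (zetaCC j : ℂ))) with hg_def
  -- Z = g on the half-plane
  have hZg : ∀ s : ℂ, (n : ℝ) + 1 / 2 < s.re → Z s = g s := by
    intro s hs
    have hcc : ∀ j ∈ Finset.range (n + 1), zetaCC j < s.re := by
      intro j hj
      have hj' : (j : ℝ) ≤ n := by exact_mod_cast Nat.lt_succ_iff.1 (Finset.mem_range.1 hj)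
      unfold zetaCC; linarith
    rw [hZ1 s hs, hg_def]
    congr 1
    calc (∫ t in Ioi (0 : ℝ), (t : ℂ) ^ (s - 1) *
          ((Real.exp (-ρ₀ ^ 2 * t) *
            ∫ r : ℝ, Real.exp (-r ^ 2 * t) *
              ∑ j ∈ Finset.range (n + 1), a2 j * r ^ (2 * j) : ℝ) : ℂ))
        = ∫ t in Ioi (0 : ℝ), ∑ j ∈ Finset.range (n + 1), (t : ℂ) ^ (s - 1) *
            ((Real.exp (-ρ₀ ^ 2 * t) *
              (a2 j * (t ^ (-zetaCC j) * Real.Gamma (zetaCC j))) : ℝ) : ℂ) := by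
          refine setIntegral_congr_fun measurableSet_Ioi (fun t ht => ?_)
          rw [zeta_rint t ht n a2]
          push_cast
          rw [Finset.mul_sum, Finset.mul_sum]
      _ = ∑ j ∈ Finset.range (n + 1), ∫ t in Ioi (0 : ℝ), (t : ℂ) ^ (s - 1) *
            ((Real.exp (-ρ₀ ^ 2 * t) *
              (a2 j * (t ^ (-zetaCC j) * Real.Gamma (zetaCC j))) : ℝ) : ℂ) :=
          integral_finset_sum _ (fun j hj => zeta_term_integrableOn hb (hcc j hj) (a2 j))
      _ = ∑ j ∈ Finset.range (n + 1),
            ((a2 j * Real.Gamma (zetaCC j) : ℝ) : ℂ) *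
              ((1 / ((ρ₀ ^ 2 : ℝ) : ℂ)) ^ (s - (zetaCC j : ℂ)) *
                Complex.Gamma (s - (zetaCC j : ℂ))) :=
          Finset.sum_congr rfl fun j hj => zeta_mellin_term hb (hcc j hj) (a2 j)
  -- analyticity of g away from S
  have hgA : AnalyticOnNhd ℂ g Sᶜ := by
    intro x hx
    refine (Complex.differentiable_one_div_Gamma.analyticAt x).mul ?_
    refine Finset.analyticAt_fun_sum _ (fun j hj => ?_)
    have hjn : j ≤ n := Nat.lt_succ_iff.1 (Finset.mem_range.1 hj)
    refine analyticAt_const.mul (AnalyticAt.mul ?_ ?_)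
    · refine AnalyticAt.cpow analyticAt_const ((analyticAt_id).sub analyticAt_const) ?_
      have : (1 / ((ρ₀ ^ 2 : ℝ) : ℂ)) = (((1 / ρ₀ ^ 2 : ℝ)) : ℂ) := by push_cast; ring
      rw [this]
      exact Complex.ofReal_mem_slitPlane.2 (by positivity)
    · refine (zeta_analyticAt_Gamma ?_).comp ((analyticAt_id).sub analyticAt_const)
      intro m hm
      apply hx
      refine ⟨m + (n - j), ?_⟩
      have hx' : x = (zetaCC j : ℂ) - m := by linear_combination hm
      rw [hx']
      have hc : ((n - j : ℕ) : ℝ) = (n : ℝ) - j := by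
        rw [Nat.cast_sub hjn]
      push_cast [hc]
      unfold zetaCC
      push_cast
      ring
  have hZA : AnalyticOnNhd ℂ Z Sᶜ := fun x hx => hZ2 x hx
  -- S is countable, so its complement is preconnected
  have hScount : S.Countable := by
    have : S = Set.range (fun m : ℕ => (((n : ℝ) + 1 / 2 - (m : ℝ) : ℝ) : ℂ)) := by
      ext z
      exact ⟨fun ⟨m, h⟩ => ⟨m, h.symm⟩, fun ⟨m, h⟩ => ⟨m, h.symm⟩⟩
    rw [this]
    exact countable_range _
  have hconn : IsPreconnected Sᶜ :=
    (hScount.isConnected_compl_of_one_lt_rank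
      (Complex.rank_real_complex ▸ Nat.one_lt_ofNat)).isPreconnected
  -- base point
  have hmem : ∀ z : ℂ, (n : ℝ) + 1 / 2 < z.re → z ∈ Sᶜ := by
    intro z hz
    rintro ⟨m, rfl⟩
    simp only [Complex.ofReal_re] at hz
    have : (0 : ℝ) ≤ m := m.cast_nonneg
    linarith
  have hz₀re : (n : ℝ) + 1 / 2 < (((n : ℝ) + 1 : ℂ)).re := by
    simp only [Complex.add_re, Complex.ofReal_re, Complex.one_re]
    linarith
  have hEq : EqOn Z g Sᶜ := by
    refine hZA.eqOn_of_preconnected_of_eventuallyEq hgA hconn (hmem _ hz₀re) ?_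
    exact Filter.eventually_of_mem
      ((isOpen_lt continuous_const Complex.continuous_re).mem_nhds hz₀re)
      (fun s hs => hZg s hs)
  intro k
  have hk : -(k : ℂ) ∈ Sᶜ := by
    rintro ⟨m, hm⟩
    have h2 := congrArg Complex.re hm
    simp only [Complex.neg_re, Complex.natCast_re, Complex.ofReal_re] at h2
    have h3 : ((2 * m : ℕ) : ℝ) = ((2 * n + 1 + 2 * k : ℕ) : ℝ) := by push_cast; linarith
    have h4 : 2 * m = 2 * n + 1 + 2 * k := by exact_mod_cast h3
    omega
  refine ⟨hZ2 _ hk, ?_⟩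
  rw [hEq hk, hg_def]
  simp only []
  rw [show Complex.Gamma (-(k : ℂ)) = 0 from Complex.Gamma_neg_nat_eq_zero k, inv_zero, zero_mul]
end
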